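/- Let p, q be positive reals and α, β, ν, ν₀ real numbers with ν·ln p > α·ln q, and let B be a real number with B ≥ −1. Then for every n ∈ ℕ the quantity λ(n) = q^(αν₀ + β) · ( (p^(nν) − q^(nα))/(p^ν − q^α) + B · (p^(nν) − (−1)^n · q^(nα))/(p^ν + q^α) ) satisfies λ(n) ≥ 0. Moreover, if B > −1 then λ(n) > 0 for all n ≥ 1. -/
import Mathlib


open Real

lemma aux_cross (P Q : ℝ) (hQ : 0 < Q) (hPQ : Q < P) (n : ℕ) :
    (P^n - (-1:ℝ)^n * Q^n) * (P - Q) ≤ (P^n - Q^n) * (P + Q) := by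
  have hpow : Q^n ≤ P^n := pow_le_pow_left₀ hQ.le hPQ.le n
  rcases Nat.even_or_odd n with h | h
  · rw [h.neg_one_pow]
    nlinarith [pow_pos hQ n]
  · obtain ⟨k, hk⟩ := h
    subst hk
    rw [Odd.neg_one_pow ⟨k, rfl⟩]
    have h2 : Q^(2*k) ≤ P^(2*k) := pow_le_pow_left₀ hQ.le hPQ.le _
    have e1 : P^(2*k+1) = P^(2*k) * P := pow_succ P (2*k)
    have e2 : Q^(2*k+1) = Q^(2*k) * Q := pow_succ Q (2*k)
    nlinarith [mul_nonneg (mul_pos (hQ.trans hPQ) hQ).le (sub_nonneg.mpr h2)]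

lemma aux_main (P Q B : ℝ) (hQ : 0 < Q) (hPQ : Q < P) (n : ℕ) (hB : B ≥ -1) :
    0 ≤ (P^n - Q^n)/(P-Q) + B * (P^n - (-1:ℝ)^n * Q^n) / (P+Q) := by
  have hsub : 0 < P - Q := sub_pos.mpr hPQ
  have hadd : 0 < P + Q := by linarith
  have hpow : Q^n ≤ P^n := pow_le_pow_left₀ hQ.le hPQ.le n
  have hsign : (-1:ℝ)^n * Q^n ≤ Q^n := by
    have : (-1:ℝ)^n ≤ 1 := by
      rcases Nat.even_or_odd n with h | h
      · rw [h.neg_one_pow]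
      · rw [h.neg_one_pow]; norm_num
    nlinarith [pow_pos hQ n]
  have hDnum : 0 ≤ P^n - (-1:ℝ)^n * Q^n := by linarith
  have hD : 0 ≤ (P^n - (-1:ℝ)^n * Q^n) / (P+Q) := div_nonneg hDnum hadd.le
  have hDA : (P^n - (-1:ℝ)^n * Q^n) / (P+Q) ≤ (P^n - Q^n)/(P-Q) := by
    rw [div_le_div_iff₀ hadd hsub]
    exact aux_cross P Q hQ hPQ n
  have : B * (P^n - (-1:ℝ)^n * Q^n) / (P+Q)
      = B * ((P^n - (-1:ℝ)^n * Q^n) / (P+Q)) := by ring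
  rw [this]
  nlinarith [hD, hDA]

lemma aux_pos (P Q B : ℝ) (hQ : 0 < Q) (hPQ : Q < P) (n : ℕ) (hn : 1 ≤ n)
    (hB : B > -1) :
    0 < (P^n - Q^n)/(P-Q) + B * (P^n - (-1:ℝ)^n * Q^n) / (P+Q) := by
  have hsub : 0 < P - Q := sub_pos.mpr hPQ
  have hadd : 0 < P + Q := by linarith
  have hpow : Q^n < P^n := pow_lt_pow_left₀ hPQ hQ.le (by omega)
  have hsign : (-1:ℝ)^n * Q^n ≤ Q^n := by
    have : (-1:ℝ)^n ≤ 1 := by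
      rcases Nat.even_or_odd n with h | h
      · rw [h.neg_one_pow]
      · rw [h.neg_one_pow]; norm_num
    nlinarith [pow_pos hQ n]
  have hDnum : 0 < P^n - (-1:ℝ)^n * Q^n := by linarith
  have hD : 0 < (P^n - (-1:ℝ)^n * Q^n) / (P+Q) := div_pos hDnum hadd
  have hDA : (P^n - (-1:ℝ)^n * Q^n) / (P+Q) ≤ (P^n - Q^n)/(P-Q) := by
    rw [div_le_div_iff₀ hadd hsub]
    exact aux_cross P Q hQ hPQ n
  have : B * (P^n - (-1:ℝ)^n * Q^n) / (P+Q)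
      = B * ((P^n - (-1:ℝ)^n * Q^n) / (P+Q)) := by ring
  rw [this]
  nlinarith [hD, hDA]

theorem stmt_13 (p q α β ν ν₀ B : ℝ) (hp : 0 < p) (hq : 0 < q)
    (hgt : ν * Real.log p > α * Real.log q) (hB : B ≥ -1) (l : ℕ → ℝ)
    (hl : ∀ n : ℕ, l n = q ^ (α * ν₀ + β) *
      ((p ^ ((n : ℝ) * ν) - q ^ ((n : ℝ) * α)) / (p ^ ν - q ^ α)
        + B * (p ^ ((n : ℝ) * ν) - (-1 : ℝ) ^ n * q ^ ((n : ℝ) * α))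
            / (p ^ ν + q ^ α))) :
    (∀ n : ℕ, 0 ≤ l n) ∧ (B > -1 → ∀ n : ℕ, 1 ≤ n → 0 < l n) := by
  have hP : (0:ℝ) < p ^ ν := Real.rpow_pos_of_pos hp ν
  have hQ : (0:ℝ) < q ^ α := Real.rpow_pos_of_pos hq α
  have hPQ : q ^ α < p ^ ν := by
    rw [Real.rpow_def_of_pos hp, Real.rpow_def_of_pos hq]
    exact Real.exp_lt_exp.mpr (by linarith [hgt])
  have hC : (0:ℝ) < q ^ (α * ν₀ + β) := Real.rpow_pos_of_pos hq _
  have hrw : ∀ n : ℕ, p ^ ((n : ℝ) * ν) = (p ^ ν)^n ∧ q ^ ((n : ℝ) * α) = (q ^ α)^n := by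
    intro n
    constructor
    · rw [mul_comm, Real.rpow_mul hp.le, Real.rpow_natCast]
    · rw [mul_comm, Real.rpow_mul hq.le, Real.rpow_natCast]
  constructor
  · intro n
    rw [hl n, (hrw n).1, (hrw n).2]
    exact mul_nonneg hC.le (aux_main _ _ B hQ hPQ n hB)
  · intro hB' n hn
    rw [hl n, (hrw n).1, (hrw n).2]
    exact mul_pos hC (aux_pos _ _ B hQ hPQ n hn hB')
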